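/- A nonprincipal ultrafilter on ω is Ramsey if and only if it is both a p-point and a q-point. -/

import Mathlib

/-!
Both directions go through the diagonalization property: for all `S a ∈ U` there is `Y ∈ U`
with `b ∈ S a` whenever `a < b` lie in `Y`. Colouring `{a, b}` (`a < b`) by whether `b ∈ S a`,
a homogeneous set in `U` must have the colour "in", since `S a ∈ U`. Diagonalizing
`S a = ⋂ k ≤ a, X k` gives a p-point, diagonalizing the complement of the piece containing `a`
gives a q-point, and diagonalizing the `U`-large colour class of `a` gives a homogeneous set.

Conversely, a p-point gives `Y ∈ U` with `Y \ S a ⊆ [0, g a]`. Cut `ℕ` into finite blocks so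
that `g a` lies below the block two steps after the one of `a`. Take a q-point selector for
the blocks and keep only the points whose block index has the parity that `U` picks. Two points
of the result are then at least two blocks apart, so the result, intersected with `Y`,
diagonalizes `S`.
-/

open Filter

theorem Nat.exists_monotone_finite_fibers_separating (g : ℕ → ℕ) :
    ∃ f : ℕ → ℕ, Monotone f ∧ (∀ n, (f ⁻¹' {n}).Finite) ∧ ∀ a b, f a + 2 ≤ f b → g a < b := by
  classical
  set H : ℕ → ℕ := fun n => (Finset.range (n + 1)).sup g + n + 1
  have hH : ∀ a n, a ≤ n → g a < H n := fun a n han => by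
    have : g a ≤ (Finset.range (n + 1)).sup g := Finset.le_sup (Finset.mem_range.2 (by omega))
    simp only [H]
    omega
  set s : ℕ → ℕ := fun k => H^[k] 0
  have hs_succ : ∀ k, s (k + 1) = H (s k) := fun k => Function.iterate_succ_apply' H k 0
  have hs : StrictMono s := strictMono_nat_of_lt_succ fun k => by rw [hs_succ]; simp only [H]; omega
  have hex : ∀ x, ∃ k, x < s k := fun x => ⟨x + 1, (Nat.lt_succ_self x).trans_le (hs.id_le _)⟩
  -- `f x = k` says that `x` lies in the block `[s (k - 1), s k)`.
  set f : ℕ → ℕ := fun x => Nat.find (hex x)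
  have hf : ∀ x k, f x ≤ k ↔ x < s k := fun x k => (Nat.find_le_iff (hex x) k).trans
    ⟨fun ⟨m, hm, h⟩ => h.trans_le (hs.monotone hm), fun h => ⟨k, le_rfl, h⟩⟩
  refine ⟨f, fun a b hab => (hf a _).2 (hab.trans_lt ((hf b _).1 le_rfl)),
    fun n => (Set.finite_Iio (s n)).subset fun x hx => (hf x n).1 hx.le, fun a b hab => ?_⟩
  calc g a < H (s (f a)) := hH _ _ ((hf a _).1 le_rfl).le
    _ = s (f a + 1) := (hs_succ _).symm
    _ ≤ b := not_lt.1 fun h => by have := (hf b _).2 h; omega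

namespace Ultrafilter

theorem exists_preimage_singleton_mem {α κ : Type*} [Finite κ] (U : Ultrafilter α) (f : α → κ) :
    ∃ i, f ⁻¹' {i} ∈ U := by
  obtain ⟨i, hi⟩ := (U.map f).eq_pure_of_finite
  exact ⟨i, mem_map.1 (hi ▸ Filter.mem_pure.2 rfl)⟩

variable (U : Ultrafilter ℕ)

def IsRamsey : Prop :=
  ∀ c : ℕ → ℕ → Fin 2, ∃ X ∈ U, ∃ i : Fin 2, ∀ a ∈ X, ∀ b ∈ X, a < b → c a b = i

def IsPPoint : Prop :=
  ∀ X : ℕ → Set ℕ, (∀ n, X n ∈ U) → ∃ Y ∈ U, ∀ n, (Y \ X n).Finite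

def IsQPoint : Prop :=
  ∀ I : ℕ → Set ℕ, (∀ n, (I n).Finite) →
    (Pairwise fun n m => Disjoint (I n) (I m)) →
    (⋃ n, I n) = Set.univ →
    ∃ X ∈ U, ∀ n, (X ∩ I n).Subsingleton

def HasDiagonalization : Prop :=
  ∀ S : ℕ → Set ℕ, (∀ a, S a ∈ U) → ∃ Y ∈ U, ∀ a ∈ Y, ∀ b ∈ Y, a < b → b ∈ S a

variable {U}

theorem isQPoint_iff_forall_exists_injOn :
    U.IsQPoint ↔ ∀ f : ℕ → ℕ, (∀ n, (f ⁻¹' {n}).Finite) → ∃ X ∈ U, Set.InjOn f X := by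
  constructor
  · intro hq f hf
    obtain ⟨X, hX, hsub⟩ := hq (fun n => f ⁻¹' {n}) hf (pairwise_disjoint_fiber f)
      (Set.iUnion_eq_univ_iff.2 fun x => ⟨f x, rfl⟩)
    exact ⟨X, hX, fun a ha b hb hab => hsub (f b) ⟨ha, hab⟩ ⟨hb, rfl⟩⟩
  · intro h I hfin hdisj hcov
    choose f hf using fun x => Set.iUnion_eq_univ_iff.1 hcov x
    have hfiber : ∀ {x n}, x ∈ I n → f x = n := fun {x n} hx =>
      by_contra fun hne => Set.disjoint_left.1 (hdisj hne) (hf x) hx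
    obtain ⟨X, hX, hinj⟩ := h f fun n => (hfin n).subset fun x hx => hx ▸ hf x
    exact ⟨X, hX, fun n a ha b hb => hinj ha.1 hb.1 ((hfiber ha.2).trans (hfiber hb.2).symm)⟩

theorem HasDiagonalization.exists_monochromatic (hD : U.HasDiagonalization) {κ : Type*}
    [Finite κ] (c : ℕ → ℕ → κ) : ∃ X ∈ U, ∃ i, ∀ a ∈ X, ∀ b ∈ X, a < b → c a b = i := by
  choose col hcol using fun a => U.exists_preimage_singleton_mem (c a)
  obtain ⟨i, hi⟩ := U.exists_preimage_singleton_mem col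
  obtain ⟨Y, hY, hdiag⟩ := hD _ hcol
  exact ⟨Y ∩ col ⁻¹' {i}, inter_mem hY hi, i,
    fun a ha b hb hab => (hdiag a ha.1 b hb.1 hab).trans ha.2⟩

theorem HasDiagonalization.isPPoint (hD : U.HasDiagonalization) : U.IsPPoint := by
  intro X hX
  obtain ⟨Y, hY, hdiag⟩ := hD (fun a => ⋂ k ≤ a, X k)
    fun a => (biInter_mem (Set.finite_Iic a)).2 fun k _ => hX k
  refine ⟨Y, hY, fun n => ?_⟩
  have hsub : (Y \ X n ∩ Set.Ici n).Subsingleton := by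
    have hlt : ∀ a ∈ Y \ X n ∩ Set.Ici n, ∀ b ∈ Y \ X n, ¬ a < b :=
      fun a ha b hb hab => hb.2 (Set.mem_iInter₂.1 (hdiag a ha.1.1 b hb.1 hab) n ha.2)
    exact fun a ha b hb => le_antisymm (not_lt.1 (hlt b hb a ha.1)) (not_lt.1 (hlt a ha b hb.1))
  exact ((Set.finite_Iio n).union hsub.finite).subset
    fun b hb => (lt_or_ge b n).imp id fun h => ⟨hb, h⟩

theorem HasDiagonalization.isQPoint (hU : (U : Filter ℕ) ≤ cofinite)
    (hD : U.HasDiagonalization) : U.IsQPoint := by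
  refine isQPoint_iff_forall_exists_injOn.2 fun f hf => ?_
  obtain ⟨Y, hY, hdiag⟩ := hD (fun a => (f ⁻¹' {f a})ᶜ) fun a => hU (hf (f a)).compl_mem_cofinite
  refine ⟨Y, hY, fun a ha b hb hab => by_contra fun hne => ?_⟩
  rcases Ne.lt_or_gt hne with h | h
  exacts [hdiag a ha b hb h hab.symm, hdiag b hb a ha h hab]

theorem IsRamsey.hasDiagonalization (hU : (U : Filter ℕ) ≤ cofinite) (hR : U.IsRamsey) :
    U.HasDiagonalization := by
  classical
  intro S hS
  obtain ⟨Y, hY, i, hhom⟩ := hR fun a b => if b ∈ S a then 0 else 1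
  obtain ⟨a, ha⟩ := U.nonempty_of_mem hY
  have hIoi : Set.Ioi a ∈ U := by
    rw [← Set.compl_Iic]
    exact hU (Set.finite_Iic a).compl_mem_cofinite
  obtain ⟨b, ⟨hbY, hbS⟩, hab⟩ := U.nonempty_of_mem (inter_mem (inter_mem hY (hS a)) hIoi)
  have hi : i = 0 := by simpa [hbS] using (hhom a ha b hbY hab).symm
  refine ⟨Y, hY, fun a ha b hb hab => ?_⟩
  simpa [hi] using hhom a ha b hb hab

theorem hasDiagonalization_of_isPPoint_of_isQPoint (hp : U.IsPPoint) (hq : U.IsQPoint) :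
    U.HasDiagonalization := by
  intro S hS
  obtain ⟨Y, hY, hfin⟩ := hp S hS
  choose g hg using fun a => (hfin a).bddAbove
  obtain ⟨f, hmono, hfib, hsep⟩ := Nat.exists_monotone_finite_fibers_separating g
  obtain ⟨Z, hZ, hinj⟩ := isQPoint_iff_forall_exists_injOn.1 hq f hfib
  obtain ⟨i, hi⟩ := U.exists_preimage_singleton_mem fun x => (f x : ZMod 2)
  refine ⟨Y ∩ Z ∩ _, inter_mem (inter_mem hY hZ) hi, ?_⟩
  rintro a ⟨⟨haY, haZ⟩, ha⟩ b ⟨⟨hbY, hbZ⟩, hb⟩ hab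
  have hlt : f a < f b := (hmono hab.le).lt_of_ne fun h => hab.ne (hinj haZ hbZ h)
  have hpar : f a % 2 = f b % 2 := (ZMod.natCast_eq_natCast_iff' _ _ _).1 (ha.trans hb.symm)
  by_contra hbS
  exact (hsep a b (by omega)).not_ge (hg a ⟨hbY, hbS⟩)

theorem isRamsey_iff_isPPoint_and_isQPoint (hU : (U : Filter ℕ) ≤ cofinite) :
    U.IsRamsey ↔ U.IsPPoint ∧ U.IsQPoint :=
  ⟨fun hR => ⟨(hR.hasDiagonalization hU).isPPoint, (hR.hasDiagonalization hU).isQPoint hU⟩,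
    fun ⟨hp, hq⟩ => (hasDiagonalization_of_isPPoint_of_isQPoint hp hq).exists_monochromatic⟩

end Ultrafilter

/-- A nonprincipal ultrafilter on ω is Ramsey iff it is both a p-point and a
q-point. -/
theorem stmt_6 (U : Ultrafilter ℕ) (hnp : ∀ A : Set ℕ, A.Finite → A ∉ U) :
    (∀ c : ℕ → ℕ → Fin 2, ∃ X ∈ U, ∃ i : Fin 2,
      ∀ a ∈ X, ∀ b ∈ X, a < b → c a b = i) ↔
    ((∀ X : ℕ → Set ℕ, (∀ n, X n ∈ U) → ∃ Y ∈ U, ∀ n, (Y \ X n).Finite) ∧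
     (∀ I : ℕ → Set ℕ, (∀ n, (I n).Finite) →
        (Pairwise fun n m => Disjoint (I n) (I m)) →
        (⋃ n, I n) = Set.univ →
        ∃ X ∈ U, ∀ n, (X ∩ I n).Subsingleton)) :=
  Ultrafilter.isRamsey_iff_isPPoint_and_isQPoint fun _ hA =>
    Ultrafilter.compl_notMem_iff.1 (hnp _ (mem_cofinite.1 hA))
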